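/- Let π be a set of primes and G a finite π'-soluble group. If M is a maximal element (with respect to inclusion) of the set of proper N^π-Dnormal subgroups of G, then the N^π-residual G^{N^π} is contained in M. -/

import Mathlib

/-- A (finite) group is a `π`-group if every prime dividing its order lies in `π`. -/
def IsPiGroup (π : Set ℕ) (G : Type*) [Group G] : Prop :=
  ∀ p : ℕ, p.Prime → p ∣ Nat.card G → p ∈ π

/-- `O^π(G)`: the smallest normal subgroup of `G` whose quotient is a `π`-group
(recall that `N.index = Nat.card (G ⧸ N)`). -/
def piResidual (π : Set ℕ) (G : Type*) [Group G] : Subgroup G :=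
  ⨅ N ∈ {N : Subgroup G | N.Normal ∧ ∀ p : ℕ, p.Prime → p ∣ N.index → p ∈ π}, N

/-- `O_π(G)`: the largest normal `π`-subgroup of `G`. -/
def piCore (π : Set ℕ) (G : Type*) [Group G] : Subgroup G :=
  ⨆ N ∈ {N : Subgroup G | N.Normal ∧ IsPiGroup π N}, N

/-- `O^π(H)` for a subgroup `H ≤ G`, regarded as a subgroup of `G`. -/
def piResidualIn (π : Set ℕ) {G : Type*} [Group G] (H : Subgroup G) : Subgroup G :=
  (piResidual π H).map H.subtype

/-- `H` is `N^π`-Dnormal in `G`: if `|π| ≤ 1` this means `H` is normal in `G`; if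
`|π| ≥ 2` it means that `O^π(H)` is normal in `G` and `O^π(G)` normalizes `H`. -/
def IsDnormal (π : Set ℕ) {G : Type*} [Group G] (H : Subgroup G) : Prop :=
  (π.Subsingleton ∧ H.Normal) ∨
  (¬ π.Subsingleton ∧ (piResidualIn π H).Normal ∧ piResidual π G ≤ Subgroup.normalizer (H : Set G))

/-- `S` is `N^π`-Dsubnormal in `G`: there is a chain `S = S₀ ≤ S₁ ≤ ⋯ ≤ Sₙ = G`
with each `Sᵢ` being `N^π`-Dnormal in `Sᵢ₊₁`. -/
def IsDsubnormal (π : Set ℕ) {G : Type*} [Group G] (S : Subgroup G) : Prop :=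
  ∃ (n : ℕ) (c : Fin (n + 1) → Subgroup G), c 0 = S ∧ c (Fin.last n) = ⊤ ∧
    ∀ i : Fin n, c i.castSucc ≤ c i.succ ∧
      IsDnormal π ((c i.castSucc).subgroupOf (c i.succ))

/-- `H` is subnormal in `G`. -/
def IsSubnormal' {G : Type*} [Group G] (H : Subgroup G) : Prop :=
  ∃ (n : ℕ) (c : Fin (n + 1) → Subgroup G), c 0 = H ∧ c (Fin.last n) = ⊤ ∧
    ∀ i : Fin n, c i.castSucc ≤ c i.succ ∧
      ((c i.castSucc).subgroupOf (c i.succ)).Normal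

/-- The class `N^π`: groups that are the (internal) direct product of a `π`-group and a
nilpotent `π'`-group. -/
def IsNPiGroup (π : Set ℕ) (G : Type*) [Group G] : Prop :=
  ∃ H K : Subgroup G, H.Normal ∧ K.Normal ∧ H ⊓ K = ⊥ ∧ H ⊔ K = ⊤ ∧
    IsPiGroup π H ∧ IsPiGroup πᶜ K ∧ Group.IsNilpotent K

/-- The `N^π`-residual `G^{N^π}`: the smallest normal subgroup of `G` whose quotient
belongs to the class `N^π`. -/
def nPiResidual (π : Set ℕ) (G : Type*) [Group G] : Subgroup G :=
  ⨅ N ∈ {N : Subgroup G | ∃ h : N.Normal, letI := h; IsNPiGroup π (G ⧸ N)}, N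

/-- `G` is `π'`-soluble: it has a normal series each of whose factors is either a
`π`-group or a `p`-group for some prime `p ∉ π`. -/
def IsPiPrimeSoluble (π : Set ℕ) (G : Type*) [Group G] : Prop :=
  ∃ (n : ℕ) (c : Fin (n + 1) → Subgroup G), c 0 = ⊥ ∧ c (Fin.last n) = ⊤ ∧
    ∀ i : Fin n, c i.castSucc ≤ c i.succ ∧
      ((c i.castSucc).subgroupOf (c i.succ)).Normal ∧
      ((∀ p : ℕ, p.Prime → p ∣ ((c i.castSucc).subgroupOf (c i.succ)).index → p ∈ π) ∨
        ∃ p : ℕ, p.Prime ∧ p ∉ π ∧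
          ∃ k : ℕ, ((c i.castSucc).subgroupOf (c i.succ)).index = p ^ k)

/-- An `N^π`-Fitting set of `G`. -/
def IsNPiFittingSet (π : Set ℕ) {G : Type*} [Group G] (F : Set (Subgroup G)) : Prop :=
  F.Nonempty ∧
  (∀ S ∈ F, ∀ T : Subgroup G, T ≤ S → IsDsubnormal π (T.subgroupOf S) → T ∈ F) ∧
  (∀ S ∈ F, ∀ T ∈ F, IsDnormal π (S.subgroupOf (S ⊔ T)) →
    IsDnormal π (T.subgroupOf (S ⊔ T)) → S ⊔ T ∈ F) ∧
  (∀ S ∈ F, ∀ x : G, S.map (MulAut.conj x).toMonoidHom ∈ F)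

/-- The `F`-radical `H_F` of a subgroup `H` of `G`: the join of all subgroups of `H`
belonging to `F` that are normal in `H`. -/
def fittingRadical {G : Type*} [Group G] (F : Set (Subgroup G)) (H : Subgroup G) : Subgroup G :=
  ⨆ S ∈ {S : Subgroup G | S ∈ F ∧ S ≤ H ∧ (S.subgroupOf H).Normal}, S

/-- `M` is an `F`-maximal subgroup of `K`. -/
def IsFMaximalIn {G : Type*} [Group G] (F : Set (Subgroup G)) (M K : Subgroup G) : Prop :=
  M ∈ F ∧ M ≤ K ∧ ∀ S ∈ F, S ≤ K → M ≤ S → S = M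

/-- `V` is an `F`-injector of `G`. -/
def IsInjector {G : Type*} [Group G] (F : Set (Subgroup G)) (V : Subgroup G) : Prop :=
  ∀ K : Subgroup G, IsSubnormal' K → IsFMaximalIn F (V ⊓ K) K

/-- `V` is an `F`-injector of the subgroup `N` of `G`. -/
def IsInjectorIn {G : Type*} [Group G] (F : Set (Subgroup G)) (V N : Subgroup G) : Prop :=
  V ≤ N ∧ ∀ K : Subgroup G, K ≤ N → IsSubnormal' (K.subgroupOf N) → IsFMaximalIn F (V ⊓ K) K

/-- `M` is an `N^π`-maximal subgroup of `X`. -/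
def IsNPiMaximal (π : Set ℕ) {X : Type*} [Group X] (M : Subgroup X) : Prop :=
  IsNPiGroup π M ∧ ∀ M' : Subgroup X, IsNPiGroup π M' → M ≤ M' → M' = M

/-- `U` is an `N^π`-projector of `G`: `UK/K` is `N^π`-maximal in `G/K` for every
normal subgroup `K` of `G`. -/
def IsNPiProjector (π : Set ℕ) {G : Type*} [Group G] (U : Subgroup G) : Prop :=
  ∀ K : Subgroup G, ∀ hK : K.Normal,
    letI := hK
    IsNPiMaximal π ((U ⊔ K).map (QuotientGroup.mk' K))

/-- An `N^π`-Fitting class of (finite) groups: a non-empty isomorphism-closed class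
closed under `N^π`-Dnormal subgroups and under joins of pairs of `N^π`-Dnormal
subgroups. -/
def IsNPiFittingClass (π : Set ℕ) (F : (H : Type) → [_inst : Group H] → Prop) : Prop :=
  (∃ (H : Type) (g : Group H) (_ : Finite H), F H (_inst := g)) ∧
  (∀ (H K : Type) [Group H] [Group K] [Finite H] [Finite K],
    F H → Nonempty (H ≃* K) → F K) ∧
  (∀ (H : Type) [Group H] [Finite H] (N : Subgroup H),
    F H → IsDnormal π N → F ↥N) ∧
  (∀ (H : Type) [Group H] [Finite H] (M N : Subgroup H),
    F ↥M → F ↥N → IsDnormal π M → IsDnormal π N → M ⊔ N = ⊤ → F H)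

/-!
If `M` is normal, it is maximal among proper normal subgroups (normal subgroups are
`N^π`-Dnormal), so `G ⧸ M` is simple; a simple quotient of a `π'`-soluble group is a
section of one of the factors of the defining series, hence a `π`-group or a `p`-group
with `p ∉ π`, and in both cases lies in `N^π`.

Otherwise `O^π(G)` normalizes `M`. If `M O^π(G) = G` then `M` is normal after all; if not,
`M O^π(G)` is a proper `N^π`-Dnormal subgroup, because `O^π(L) = O^π(G)` for every
`L ≥ O^π(G)`. Maximality gives `O^π(G) ≤ M`, and `G^{N^π} ≤ O^π(G)` since `G ⧸ O^π(G)`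
is a `π`-group.
-/

def IsPiNumber (π : Set ℕ) (n : ℕ) : Prop :=
  ∀ p : ℕ, p.Prime → p ∣ n → p ∈ π

namespace IsPiNumber

variable {π : Set ℕ} {m n : ℕ}

lemma one : IsPiNumber π 1 :=
  fun _ hp h => absurd (Nat.eq_one_of_dvd_one h) hp.ne_one

lemma of_dvd (hn : IsPiNumber π n) (hmn : m ∣ n) : IsPiNumber π m :=
  fun p hp hpm => hn p hp (hpm.trans hmn)

lemma mul (hm : IsPiNumber π m) (hn : IsPiNumber π n) : IsPiNumber π (m * n) :=
  fun p hp h => (hp.dvd_mul.1 h).elim (hm p hp) (hn p hp)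

end IsPiNumber

lemma Fin.exists_not_castSucc_and_succ {n : ℕ} (p : Fin (n + 1) → Prop) (h0 : ¬ p 0)
    (hlast : p (Fin.last n)) : ∃ i : Fin n, ¬ p i.castSucc ∧ p i.succ := by
  induction n with
  | zero => exact absurd hlast h0
  | succ n ih =>
    by_cases h : p (Fin.last n).castSucc
    · obtain ⟨i, hi⟩ := ih (fun j => p j.castSucc) h0 h
      exact ⟨i.castSucc, hi⟩
    · exact ⟨Fin.last n, h, hlast⟩

section PiResidual

variable {π : Set ℕ} {G H : Type*} [Group G] [Group H]

lemma piResidual_le {N : Subgroup G} (hN : N.Normal) (h : IsPiNumber π N.index) :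
    piResidual π G ≤ N :=
  iInf₂_le N ⟨hN, h⟩

lemma piResidual_le_comap (f : H →* G) : piResidual π H ≤ (piResidual π G).comap f := by
  intro x hx
  simp only [Subgroup.mem_comap, piResidual, Subgroup.mem_iInf] at hx ⊢
  intro N ⟨hN, hNπ⟩
  refine hx (N.comap f) ⟨hN.comap f, ?_⟩
  rw [Subgroup.index_comap]
  exact IsPiNumber.of_dvd hNπ (Subgroup.relIndex_dvd_index_of_normal N f.range)

instance piResidual_characteristic : (piResidual π G).Characteristic :=
  Subgroup.characteristic_iff_le_comap.2 fun φ => piResidual_le_comap φ.toMonoidHom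

instance normal_piResidualIn {R : Subgroup G} [R.Normal] : (piResidualIn π R).Normal :=
  ConjAct.normal_of_characteristic_of_normal

lemma piResidualIn_mono {R L : Subgroup G} (h : R ≤ L) :
    piResidualIn π R ≤ piResidualIn π L := by
  have hR : R.subtype = L.subtype.comp (Subgroup.inclusion h) := rfl
  rw [piResidualIn, hR, ← Subgroup.map_map]
  exact Subgroup.map_mono (Subgroup.map_le_iff_le_comap.2 (piResidual_le_comap _))

lemma isPiNumber_index_inf {A B : Subgroup G} [A.Normal] (hA : IsPiNumber π A.index)
    (hB : IsPiNumber π B.index) : IsPiNumber π (A ⊓ B).index := by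
  rw [← Subgroup.relIndex_mul_index inf_le_right, Subgroup.inf_relIndex_right]
  exact (hA.of_dvd (Subgroup.relIndex_dvd_index_of_normal A B)).mul hB

-- In a finite group the infimum defining `O^π(G)` is a finite one.
lemma isPiNumber_index_piResidual [Finite G] : IsPiNumber π (piResidual π G).index := by
  let S := {N : Subgroup G | N.Normal ∧ IsPiNumber π N.index}
  have hS : S.Finite := Set.toFinite S
  have hR : piResidual π G = hS.toFinset.inf id := by
    rw [Finset.inf_eq_iInf]
    simp only [Set.Finite.mem_toFinset, id]
    rfl
  rw [hR]
  refine (Finset.inf_induction (p := (· ∈ S)) ⟨inferInstance, ?_⟩ ?_ fun N hN => ?_).2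
  · rw [Subgroup.index_top]
    exact IsPiNumber.one
  · rintro A ⟨hA, hAπ⟩ B ⟨hB, hBπ⟩
    exact ⟨inferInstance, isPiNumber_index_inf hAπ hBπ⟩
  · exact hS.mem_toFinset.1 hN

lemma isPiNumber_relIndex_piResidualIn [Finite G] (L : Subgroup G) :
    IsPiNumber π ((piResidualIn π L).relIndex L) := by
  have h : (piResidualIn π L).subgroupOf L = piResidual π L :=
    Subgroup.comap_map_eq_self_of_injective L.subtype_injective _
  rw [Subgroup.relIndex, h]
  exact isPiNumber_index_piResidual

lemma piResidualIn_eq_of_piResidual_le [Finite G] {L : Subgroup G} (h : piResidual π G ≤ L) :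
    piResidualIn π L = piResidual π G := by
  set R := piResidual π G
  apply le_antisymm
  · rw [piResidualIn, Subgroup.map_le_iff_le_comap]
    exact piResidual_le Subgroup.normal_subgroupOf
      (isPiNumber_index_piResidual.of_dvd (Subgroup.relIndex_dvd_index_of_normal R L))
  · have hRR : IsPiNumber π (piResidualIn π R).index := by
      have hle : piResidualIn π R ≤ R := Subgroup.map_subtype_le _
      rw [← Subgroup.relIndex_mul_index hle]
      exact (isPiNumber_relIndex_piResidualIn R).mul isPiNumber_index_piResidual
    calc R ≤ piResidualIn π R := piResidual_le inferInstance hRR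
      _ ≤ piResidualIn π L := piResidualIn_mono h

end PiResidual

section Dnormal

variable {π : Set ℕ} {G : Type*} [Group G]

lemma IsDnormal.of_normal {N : Subgroup G} (hN : N.Normal) : IsDnormal π N := by
  by_cases hπ : π.Subsingleton
  · exact Or.inl ⟨hπ, hN⟩
  · refine Or.inr ⟨hπ, inferInstance, ?_⟩
    rw [Subgroup.normalizer_eq_top_iff.2 hN]
    exact le_top

lemma isDnormal_of_piResidual_le [Finite G] (hπ : ¬ π.Subsingleton) {L : Subgroup G}
    (h : piResidual π G ≤ L) : IsDnormal π L := by
  refine Or.inr ⟨hπ, ?_, h.trans Subgroup.le_normalizer⟩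
  rw [piResidualIn_eq_of_piResidual_le h]
  infer_instance

end Dnormal

section NPiGroup

variable {π : Set ℕ} {G Q : Type*} [Group G] [Group Q]

lemma IsNPiGroup.of_isPiGroup (h : IsPiGroup π Q) : IsNPiGroup π Q := by
  refine ⟨⊤, ⊥, inferInstance, inferInstance, inf_bot_eq ⊤, sup_bot_eq ⊤, ?_, ?_,
    inferInstance⟩
  · rw [IsPiGroup, Subgroup.card_top]
    exact h
  · rw [IsPiGroup, Subgroup.card_bot]
    exact IsPiNumber.one

lemma IsNPiGroup.of_card_eq_prime_pow {p k : ℕ} (hp : p.Prime) (hpπ : p ∉ π)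
    (hcard : Nat.card Q = p ^ k) : IsNPiGroup π Q := by
  have : Finite Q := Nat.finite_of_card_ne_zero (hcard ▸ pow_ne_zero k hp.ne_zero)
  have : Fact p.Prime := ⟨hp⟩
  refine ⟨⊥, ⊤, inferInstance, inferInstance, bot_inf_eq ⊤, bot_sup_eq ⊤, ?_, ?_,
    ((IsPGroup.of_card hcard).to_subgroup ⊤).isNilpotent⟩
  · rw [IsPiGroup, Subgroup.card_bot]
    exact IsPiNumber.one
  · intro q hq hdvd
    rw [Subgroup.card_top, hcard] at hdvd
    rwa [(Nat.prime_dvd_prime_iff_eq hq hp).1 (hq.dvd_of_dvd_pow hdvd)]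

lemma nPiResidual_le {N : Subgroup G} [N.Normal] (h : IsNPiGroup π (G ⧸ N)) :
    nPiResidual π G ≤ N :=
  iInf₂_le N ⟨inferInstance, h⟩

lemma nPiResidual_le_piResidual [Finite G] : nPiResidual π G ≤ piResidual π G := by
  refine nPiResidual_le (IsNPiGroup.of_isPiGroup ?_)
  rw [IsPiGroup, ← Subgroup.index_eq_card]
  exact isPiNumber_index_piResidual

end NPiGroup

section SimpleQuotient

variable {G Q : Type*} [Group G] [Group Q]

lemma QuotientGroup.isSimpleGroup_of_maximal_normal {M : Subgroup G} [M.Normal] (hM : M ≠ ⊤)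
    (hmax : ∀ L : Subgroup G, L ≠ ⊤ → L.Normal → M ≤ L → L = M) :
    IsSimpleGroup (G ⧸ M) := by
  have : Nontrivial (G ⧸ M) := QuotientGroup.nontrivial_iff.2 hM
  refine ⟨fun H hH => ?_⟩
  have hinj := Subgroup.comap_injective (QuotientGroup.mk'_surjective M)
  have hMH : M ≤ H.comap (QuotientGroup.mk' M) :=
    (QuotientGroup.ker_mk' M).ge.trans (MonoidHom.ker_le_comap _ H)
  by_cases htop : H.comap (QuotientGroup.mk' M) = ⊤
  · exact Or.inr (hinj (htop.trans (Subgroup.comap_top _).symm))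
  · refine Or.inl (hinj ?_)
    rw [hmax _ htop (hH.comap _) hMH, MonoidHom.comap_bot, QuotientGroup.ker_mk']

lemma card_dvd_index_of_le_ker {f : G →* Q} (hf : Function.Surjective f) {N : Subgroup G}
    (h : N ≤ f.ker) : Nat.card Q ∣ N.index := by
  have hdvd := Subgroup.index_dvd_of_le h
  rwa [Subgroup.index_ker, MonoidHom.range_eq_top.2 hf, Subgroup.card_top] at hdvd

lemma le_ker_of_map_ne_top [IsSimpleGroup Q] {f : G →* Q} (hf : Function.Surjective f)
    {N : Subgroup G} [N.Normal] (hN : N.map f ≠ ⊤) : N ≤ f.ker := by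
  rw [← Subgroup.map_eq_bot_iff]
  exact ((Subgroup.Normal.map inferInstance f hf).eq_bot_or_eq_top).resolve_right hN

-- `Q` is a quotient of the first factor of the series whose image is all of `Q`.
lemma exists_card_dvd_relIndex_of_isSimpleGroup [IsSimpleGroup Q] {f : G →* Q}
    (hf : Function.Surjective f) {n : ℕ} (c : Fin (n + 1) → Subgroup G) (h0 : c 0 = ⊥)
    (hlast : c (Fin.last n) = ⊤)
    (hc : ∀ i : Fin n, ((c i.castSucc).subgroupOf (c i.succ)).Normal) :
    ∃ i : Fin n, Nat.card Q ∣ (c i.castSucc).relIndex (c i.succ) := by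
  obtain ⟨i, hi, hi'⟩ := Fin.exists_not_castSucc_and_succ (fun j => (c j).map f = ⊤)
    (by simp only [h0, Subgroup.map_bot, bot_ne_top, not_false_eq_true])
    (by simp only [hlast, Subgroup.map_top_of_surjective f hf])
  set g := f.comp (c i.succ).subtype
  have hg : Function.Surjective g := by
    rw [← MonoidHom.range_eq_top, MonoidHom.range_comp, Subgroup.range_subtype]
    exact hi'
  have hne : ((c i.castSucc).subgroupOf (c i.succ)).map g ≠ ⊤ := by
    rw [← Subgroup.map_map, Subgroup.subgroupOf_map_subtype]
    exact fun h => hi (top_le_iff.1 (h.ge.trans (Subgroup.map_mono inf_le_left)))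
  have := hc i
  exact ⟨i, card_dvd_index_of_le_ker hg (le_ker_of_map_ne_top hg hne)⟩

lemma IsPiPrimeSoluble.isNPiGroup_of_surjective {π : Set ℕ} (hG : IsPiPrimeSoluble π G)
    [IsSimpleGroup Q] {f : G →* Q} (hf : Function.Surjective f) : IsNPiGroup π Q := by
  obtain ⟨n, c, h0, hlast, hc⟩ := hG
  obtain ⟨i, hi⟩ := exists_card_dvd_relIndex_of_isSimpleGroup hf c h0 hlast fun i => (hc i).2.1
  rcases (hc i).2.2 with hπ | ⟨p, hp, hpπ, k, hk⟩
  · exact IsNPiGroup.of_isPiGroup (IsPiNumber.of_dvd hπ hi)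
  · rw [Subgroup.relIndex, hk] at hi
    obtain ⟨m, -, hm⟩ := (Nat.dvd_prime_pow hp).1 hi
    exact IsNPiGroup.of_card_eq_prime_pow hp hpπ hm

end SimpleQuotient

lemma nPiResidual_le_of_maximal_normal {π : Set ℕ} {G : Type*} [Group G]
    (hG : IsPiPrimeSoluble π G) {M : Subgroup G} [M.Normal] (hM : M ≠ ⊤)
    (hmax : ∀ L : Subgroup G, L ≠ ⊤ → L.Normal → M ≤ L → L = M) :
    nPiResidual π G ≤ M :=
  have := QuotientGroup.isSimpleGroup_of_maximal_normal hM hmax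
  nPiResidual_le (hG.isNPiGroup_of_surjective (QuotientGroup.mk'_surjective M))

theorem nPiResidual_le_of_maximal_dnormal_general (π : Set ℕ)
    (G : Type*) [Group G] [Finite G] (hsol : IsPiPrimeSoluble π G)
    (M : Subgroup G) (hMproper : M ≠ ⊤) (hMD : IsDnormal π M)
    (hMmax : ∀ L : Subgroup G, L ≠ ⊤ → IsDnormal π L → M ≤ L → L = M) :
    nPiResidual π G ≤ M := by
  have hmaxNormal : ∀ L : Subgroup G, L ≠ ⊤ → L.Normal → M ≤ L → L = M :=
    fun L hL hLn => hMmax L hL (IsDnormal.of_normal hLn)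
  rcases hMD with ⟨-, hMn⟩ | ⟨hπ, -, hRM⟩
  · exact nPiResidual_le_of_maximal_normal hsol hMproper hmaxNormal
  by_cases hL : M ⊔ piResidual π G = ⊤
  · have hMn : M.Normal := Subgroup.normalizer_eq_top_iff.1
      (top_le_iff.1 (hL ▸ sup_le Subgroup.le_normalizer hRM))
    exact nPiResidual_le_of_maximal_normal hsol hMproper hmaxNormal
  · have hLM := hMmax _ hL (isDnormal_of_piResidual_le hπ le_sup_right) le_sup_left
    exact nPiResidual_le_piResidual.trans (le_sup_right.trans hLM.le)

/-- Lemma 1.6: a maximal `N^π`-Dnormal proper subgroup of a `π'`-soluble group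
contains the `N^π`-residual. -/
theorem nPiResidual_le_of_maximal_dnormal (π : Set ℕ) (hπ : ∀ p ∈ π, p.Prime)
    (G : Type*) [Group G] [Finite G] (hsol : IsPiPrimeSoluble π G)
    (M : Subgroup G) (hMproper : M ≠ ⊤) (hMD : IsDnormal π M)
    (hMmax : ∀ L : Subgroup G, L ≠ ⊤ → IsDnormal π L → M ≤ L → L = M) :
    nPiResidual π G ≤ M :=
  nPiResidual_le_of_maximal_dnormal_general π G hsol M hMproper hMD hMmax
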